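/- arXiv:2304.01806 — 4 statements merged into one kernel-verified Lean document; each statement's English description precedes it below -/
import Mathlib

section
/- For single-machine scheduling with equal processing times p and release dates r_j, in any active schedule (one where no job can start earlier without violating release dates or machine availability), the completion time of every job equals r_i + l·p for some job index i and some integer l with 1 ≤ l ≤ n. -/
/-! Shifting a job left to the latest of its release date and the completion times of the jobs
that finish before it keeps the schedule feasible; so in an active schedule every job starts
either at its release date or exactly when another job completes. Following these predecessors
back, each step moves to a job that starts strictly earlier, so after at most `n` steps we reach
a job `i` with `S i = r i`, and the completion time of the job we started from is `r i + l * p`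
with `l` the number of jobs in the chain. -/

open Finset Function

/-- Feasibility of a single-machine schedule with common processing time `p`
and release dates `r`: every job starts no earlier than its release date, and
the processing intervals of distinct jobs are pairwise disjoint. -/
def FeasibleSched {n : ℕ} (r : Fin n → ℝ) (p : ℝ) (S : Fin n → ℝ) : Prop :=
  (∀ j, r j ≤ S j) ∧ ∀ i j, i ≠ j → (S i + p ≤ S j ∨ S j + p ≤ S i)

/-- A schedule is active if no single job can start strictly earlier, keeping
all other start times fixed, while preserving feasibility. -/
def ActiveSched {n : ℕ} (r : Fin n → ℝ) (p : ℝ) (S : Fin n → ℝ) : Prop :=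
  FeasibleSched r p S ∧
    ∀ j t, t < S j → ¬ FeasibleSched r p (Function.update S j t)

lemma card_filter_lt_lt_card_filter_lt {ι α : Type*} [Fintype ι] [LinearOrder α] (f : ι → α)
    {a b : ι} (hab : f a < f b) : #{i | f i < f a} < #{i | f i < f b} := by
  refine card_lt_card <| (ssubset_iff_of_subset fun i hi => ?_).2 ⟨a, ?_, ?_⟩
  · simp only [mem_filter, mem_univ, true_and] at hi ⊢
    exact hi.trans hab
  · simpa using hab
  · simp

section Schedule

variable {n : ℕ} {r : Fin n → ℝ} {p : ℝ} {S : Fin n → ℝ}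

lemma FeasibleSched.update_of_le {j : Fin n} {t : ℝ} (hS : FeasibleSched r p S)
    (hrt : r j ≤ t) (htS : t ≤ S j) (hpred : ∀ k ≠ j, S k + p ≤ S j → S k + p ≤ t) :
    FeasibleSched r p (update S j t) := by
  have hsep : ∀ k ≠ j, S k + p ≤ t ∨ t + p ≤ S k := fun k hk =>
    (hS.2 k j hk).imp (hpred k hk) fun h => by linarith
  refine ⟨fun i => ?_, fun a b hab => ?_⟩
  · rcases eq_or_ne i j with rfl | hij
    · simpa using hrt
    · simpa [hij] using hS.1 i
  · rcases eq_or_ne a j with rfl | haj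
    · simpa [Ne.symm hab, or_comm] using hsep b (Ne.symm hab)
    rcases eq_or_ne b j with rfl | hbj
    · simpa [hab] using hsep a hab
    simpa [haj, hbj] using hS.2 a b hab

lemma ActiveSched.eq_release_or_eq_completion (hact : ActiveSched r p S) (j : Fin n) :
    S j = r j ∨ ∃ k ≠ j, S j = S k + p := by
  by_contra! h
  let T : Finset ℝ := insert (r j) (({k | k ≠ j ∧ S k + p ≤ S j} : Finset _).image (S · + p))
  have hT : T.Nonempty := insert_nonempty _ _
  have hle : ∀ k ≠ j, S k + p ≤ S j → S k + p ≤ T.max' hT := fun k hk hkj =>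
    le_max' T _ (mem_insert_of_mem (mem_image_of_mem _ (by simp [hk, hkj])))
  have hlt : T.max' hT < S j := by
    refine (max'_lt_iff T hT).2 fun x hx => ?_
    rcases mem_insert.1 hx with rfl | hx
    · exact (hact.1.1 j).lt_of_ne (Ne.symm h.1)
    · obtain ⟨k, hk, rfl⟩ := mem_image.1 hx
      simp only [mem_filter, mem_univ, true_and] at hk
      exact hk.2.lt_of_ne (h.2 k hk.1).symm
  exact hact.2 j _ hlt (hact.1.update_of_le (le_max' T _ (mem_insert_self _ _)) hlt.le hle)

theorem ActiveSched.exists_completion_eq (hp : 0 < p) (hact : ActiveSched r p S) (j : Fin n) :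
    ∃ i, ∃ l : ℕ, 1 ≤ l ∧ l ≤ #{k | S k < S j} + 1 ∧ S j + p = r i + l * p := by
  rcases hact.eq_release_or_eq_completion j with h | ⟨k, -, hk⟩
  · exact ⟨j, 1, le_rfl, by omega, by rw [h]; push_cast; ring⟩
  · have hcard := card_filter_lt_lt_card_filter_lt S (show S k < S j by linarith)
    obtain ⟨i, l, -, hl, he⟩ := hact.exists_completion_eq hp k
    exact ⟨i, l + 1, by omega, by omega, by rw [hk, he]; push_cast; ring⟩
termination_by #{k | S k < S j}

end Schedule

theorem active_schedule_completion_times_general {n : ℕ} (r : Fin n → ℝ) (p : ℝ)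
    (hp : 0 < p) (S : Fin n → ℝ)
    (hact : ActiveSched r p S) :
    ∀ j : Fin n, ∃ (i : Fin n) (l : ℕ), 1 ≤ l ∧ l ≤ n ∧
      S j + p = r i + (l : ℝ) * p := by
  intro j
  obtain ⟨i, l, hl1, hl, he⟩ := hact.exists_completion_eq hp j
  have hcard : #{k | S k < S j} < n := by
    simpa using card_lt_univ_of_notMem (s := {k | S k < S j}) (x := j) (by simp)
  exact ⟨i, l, hl1, by omega, he⟩

/-- In any active schedule, the completion time `S j + p` of every job equals
`r i + l·p` for some job `i` and some integer `1 ≤ l ≤ n`. -/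
theorem active_schedule_completion_times {n : ℕ} (r : Fin n → ℝ) (p : ℝ)
    (hp : 0 < p) (hr : ∀ j, 0 ≤ r j) (S : Fin n → ℝ)
    (hact : ActiveSched r p S) :
    ∀ j : Fin n, ∃ (i : Fin n) (l : ℕ), 1 ≤ l ∧ l ≤ n ∧
      S j + p = r i + (l : ℝ) * p :=
  active_schedule_completion_times_general r p hp S hact
end

section
/- For the single-machine problem with equal processing times p, release dates, and jobs partitioned into two chains where each chain is ordered by nondecreasing release dates, there exists an optimal schedule for minimizing total completion time ∑C_j in which the jobs are processed in nondecreasing order of their release dates. -/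
/-!
Starting jobs as early as possible gives `C_k = max_{j ≤ k} (r_j + (k + 1 - j) p)` for the job in
position `k`. In the sorted order the `j`-th release date is the `(j+1)`-st smallest, so any other
order has a job with at least that release date among its first `j + 1` positions; hence every
term of the maximum for the sorted order is dominated by one for the other order, and the sorted
schedule has pointwise smaller completion times. A stable sort also respects both chains, since
release dates are nondecreasing along each chain.
-/

/-- Completion time of the job in position `k` when jobs with release dates
`rs 0, rs 1, …` (in processing order) and common processing time `p` are
started as early as possible one after the other. -/
def compTime (p : ℝ) (rs : ℕ → ℝ) : ℕ → ℝ
  | 0 => rs 0 + p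
  | k + 1 => max (rs (k + 1)) (compTime p rs k) + p

/-- Release dates in processing order for the permutation `π`. -/
noncomputable def relSeq {n : ℕ} (r : Fin n → ℝ) (π : Equiv.Perm (Fin n)) : ℕ → ℝ :=
  fun k => if h : k < n then r (π ⟨k, h⟩) else 0

/-- A permutation respects the two chains (jobs of equal chain label are
processed in increasing index order). -/
def RespectsChains {n : ℕ} (chain : Fin n → Fin 2) (π : Equiv.Perm (Fin n)) : Prop :=
  ∀ k l : Fin n, k < l → chain (π k) = chain (π l) → π k < π l

open Finset Function

section CompletionTime

variable (p : ℝ) (rs : ℕ → ℝ)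

lemma le_compTime {j k : ℕ} (hjk : j ≤ k) : rs j + ((k : ℝ) + 1 - j) * p ≤ compTime p rs k := by
  induction k with
  | zero =>
    obtain rfl : j = 0 := by omega
    simp [compTime]
  | succ k ih =>
    rw [compTime]
    rcases hjk.eq_or_lt with rfl | hlt
    · push_cast
      linarith [le_max_left (rs (k + 1)) (compTime p rs k)]
    · have := ih (by omega)
      push_cast
      linarith [le_max_right (rs (k + 1)) (compTime p rs k)]

lemma exists_compTime_eq (k : ℕ) : ∃ j ≤ k, compTime p rs k = rs j + ((k : ℝ) + 1 - j) * p := by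
  induction k with
  | zero => exact ⟨0, le_rfl, by simp [compTime]⟩
  | succ k ih =>
    obtain ⟨j, hjk, hj⟩ := ih
    rcases le_total (rs (k + 1)) (compTime p rs k) with h | h
    · refine ⟨j, by omega, ?_⟩
      rw [compTime, max_eq_right h, hj]
      push_cast
      ring
    · refine ⟨k + 1, le_rfl, ?_⟩
      rw [compTime, max_eq_left h]
      push_cast
      ring

variable {p}

lemma compTime_le_compTime (hp : 0 ≤ p) {a b : ℕ → ℝ} {k : ℕ}
    (hab : ∀ j ≤ k, ∃ i ≤ j, a j ≤ b i) : compTime p a k ≤ compTime p b k := by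
  obtain ⟨j, hjk, hj⟩ := exists_compTime_eq p a k
  obtain ⟨i, hij, hi⟩ := hab j hjk
  calc compTime p a k = a j + ((k : ℝ) + 1 - j) * p := hj
    _ ≤ b i + ((k : ℝ) + 1 - i) * p := by gcongr
    _ ≤ compTime p b k := le_compTime p b (hij.trans hjk)

end CompletionTime

lemma Fin.exists_le_le_apply_of_injective {n : ℕ} {f : Fin n → Fin n} (hf : Injective f)
    (j : Fin n) : ∃ i ≤ j, j ≤ f i := by
  by_contra! h
  have := card_le_card_of_injOn f (s := Iic j) (t := Iio j)
    (fun i hi => mem_Iio.2 (h i (mem_Iic.1 hi))) hf.injOn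
  simp at this

section Schedules

variable {n : ℕ}

lemma exists_le_relSeq_le_of_monotone {r : Fin n → ℝ} {π : Equiv.Perm (Fin n)}
    (hπ : Monotone (r ∘ π)) (σ : Equiv.Perm (Fin n)) {j : ℕ} (hj : j < n) :
    ∃ i ≤ j, relSeq r π j ≤ relSeq r σ i := by
  obtain ⟨i, hij, hji⟩ :=
    Fin.exists_le_le_apply_of_injective (σ.trans π.symm).injective ⟨j, hj⟩
  refine ⟨i, hij, ?_⟩
  simpa [relSeq, hj] using hπ hji

lemma compTime_relSeq_le_of_monotone {p : ℝ} (hp : 0 ≤ p) {r : Fin n → ℝ}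
    {π : Equiv.Perm (Fin n)} (hπ : Monotone (r ∘ π)) (σ : Equiv.Perm (Fin n)) {k : ℕ}
    (hk : k < n) : compTime p (relSeq r π) k ≤ compTime p (relSeq r σ) k :=
  compTime_le_compTime hp fun _ hj => exists_le_relSeq_le_of_monotone hπ σ (hj.trans_lt hk)

lemma respectsChains_sort {α : Type*} [LinearOrder α] {r : Fin n → α} {chain : Fin n → Fin 2}
    (hchain : ∀ i j : Fin n, i < j → chain i = chain j → r i ≤ r j) :
    RespectsChains chain (Tuple.sort r) := by
  obtain ⟨hmono, hstable⟩ := Tuple.eq_sort_iff.mp (rfl : Tuple.sort r = Tuple.sort r)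
  intro k l hkl hc
  by_contra! h
  have hlt : Tuple.sort r l < Tuple.sort r k := h.lt_of_ne ((Tuple.sort r).injective.ne hkl.ne')
  exact hlt.not_gt (hstable k l hkl (le_antisymm (hmono hkl.le) (hchain _ _ hlt hc.symm)))

end Schedules

/-- Two chains with nondecreasing release dates along each chain: there exists
an optimal schedule for `∑ C_j` processing the jobs in nondecreasing order of
release dates. -/
theorem exists_optimal_sorted_two_chains {n : ℕ} (r : Fin n → ℝ) (p : ℝ)
    (hp : 0 < p) (chain : Fin n → Fin 2)
    (hchain : ∀ i j : Fin n, i < j → chain i = chain j → r i ≤ r j) :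
    ∃ π : Equiv.Perm (Fin n), RespectsChains chain π ∧
      (∀ k l : Fin n, k ≤ l → r (π k) ≤ r (π l)) ∧
      ∀ σ : Equiv.Perm (Fin n), RespectsChains chain σ →
        ∑ k ∈ Finset.range n, compTime p (relSeq r π) k ≤
          ∑ k ∈ Finset.range n, compTime p (relSeq r σ) k :=
  ⟨Tuple.sort r, respectsChains_sort hchain, fun _ _ hkl => Tuple.monotone_sort r hkl,
    fun σ _ => sum_le_sum fun _ hk =>
      compTime_relSeq_le_of_monotone hp.le (Tuple.monotone_sort r) σ (mem_range.1 hk)⟩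
end

section
/- In the dynamic programming dominance rule, if two states with the same position index pos satisfy f' ≤ f'' and C'_max ≤ C''_max, then for every extension of the dominated state (f'', C''_max, pos) to a complete schedule there is a corresponding extension of (f', C'_max, pos) with objective value at most as large, for any regular (nondecreasing in completion times) objective function. -/
/-- Completion times of jobs appended, in order, after a partial schedule with
makespan `C`: each job starts at the maximum of its release date and the
previous completion time (initially `C`). -/
def compList {α : Type*} (p : ℝ) (r : α → ℝ) : ℝ → List α → List ℝ
  | _, [] => []
  | C, a :: t => (max (r a) C + p) :: compList p r (max (r a) C + p) t

theorem compList_forall₂_le {α : Type*} (p : ℝ) (r : α → ℝ) :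
    ∀ (L : List α) {C C' : ℝ}, C ≤ C' →
      List.Forall₂ (· ≤ ·) (compList p r C L) (compList p r C' L)
  | [], _, _, _ => .nil
  | a :: t, C, C', h =>
      have hstart : max (r a) C + p ≤ max (r a) C' + p := by gcongr
      .cons hstart (compList_forall₂_le p r t hstart)

theorem dominance_rule_general {α : Type*} (p : ℝ) (r : α → ℝ)
    (F : List ℝ → ℝ)
    (hreg : ∀ xs ys : List ℝ, List.Forall₂ (· ≤ ·) xs ys → F xs ≤ F ys)
    (Feas : List α → Prop)
    (f' f'' Cmax' Cmax'' : ℝ) (hf : f' ≤ f'') (hC : Cmax' ≤ Cmax'') :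
    ∀ L'' : List α, Feas L'' →
      ∃ L' : List α, Feas L' ∧ L'.Perm L'' ∧
        f' + F (compList p r Cmax' L') ≤ f'' + F (compList p r Cmax'' L'') :=
  fun L hL => ⟨L, hL, .refl L, add_le_add hf (hreg _ _ (compList_forall₂_le p r L hC))⟩

/-- Dominance rule: if two states with the same position satisfy `f' ≤ f''`
and `C'ₘₐₓ ≤ C''ₘₐₓ`, then for every feasible extension of the dominated state
`(f'', C''ₘₐₓ, pos)` by the remaining jobs there is a feasible extension of
`(f', C'ₘₐₓ, pos)` (a rearrangement of the same remaining jobs) whose total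
objective value is at most as large, for any regular objective. -/
theorem dominance_rule {α : Type*} (p : ℝ) (hp : 0 < p) (r : α → ℝ)
    (F : List ℝ → ℝ)
    (hreg : ∀ xs ys : List ℝ, List.Forall₂ (· ≤ ·) xs ys → F xs ≤ F ys)
    (Feas : List α → Prop)
    (f' f'' Cmax' Cmax'' : ℝ) (hf : f' ≤ f'') (hC : Cmax' ≤ Cmax'') :
    ∀ L'' : List α, Feas L'' →
      ∃ L' : List α, Feas L' ∧ L'.Perm L'' ∧
        f' + F (compList p r Cmax' L') ≤ f'' + F (compList p r Cmax'' L'') :=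
  dominance_rule_general p r F hreg Feas f' f'' Cmax' Cmax'' hf hC
end

section
/- The quantity LB1 = max over machines M of (C_M(π) + max{0, OT_M(π) − IT_M(π)}), computed from the relaxed schedule π that starts every unscheduled operation at its earliest possible time ignoring machine conflicts among unscheduled operations, is a valid lower bound on the makespan of every feasible completion of the current partial schedule. -/
open MeasureTheory

variable {m K : ℕ}

/-- Operations assigned to machine `M`. -/
def opsOn (mach : Fin m → Fin K) (M : Fin K) : Finset (Fin m) :=
  Finset.univ.filter fun o => mach o = M

/-- Total time machine `M` is busy in the relaxed schedule that starts every
operation `o` at its earliest possible time `e o` (operations may overlap). -/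
noncomputable def busy (mach : Fin m → Fin K) (e : Fin m → ℝ) (p : ℝ)
    (M : Fin K) : ℝ :=
  (volume (⋃ o ∈ opsOn mach M, Set.Ico (e o) (e o + p))).toReal

/-- Makespan of machine `M` in the relaxed schedule. -/
noncomputable def CM (mach : Fin m → Fin K) (e : Fin m → ℝ) (p : ℝ)
    (M : Fin K) (h : (opsOn mach M).Nonempty) : ℝ :=
  (opsOn mach M).sup' h fun o => e o + p

/-- Earliest start on machine `M` in the relaxed schedule. -/
noncomputable def sMin (mach : Fin m → Fin K) (e : Fin m → ℝ)
    (M : Fin K) (h : (opsOn mach M).Nonempty) : ℝ :=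
  (opsOn mach M).inf' h e

/-- Total overlap time on machine `M` (counted with multiplicity). -/
noncomputable def OT (mach : Fin m → Fin K) (e : Fin m → ℝ) (p : ℝ)
    (M : Fin K) : ℝ :=
  (opsOn mach M).card * p - busy mach e p M

/-- Idle time of machine `M` between its operations in the relaxed schedule. -/
noncomputable def IT (mach : Fin m → Fin K) (e : Fin m → ℝ) (p : ℝ)
    (M : Fin K) (h : (opsOn mach M).Nonempty) : ℝ :=
  (CM mach e p M h - sMin mach e M h) - busy mach e p M

/-- `LB1 = max_M (C_M + max{0, OT_M − IT_M})` is a valid lower bound on the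
makespan of every feasible completion of the current partial schedule. -/
theorem LB1_is_lower_bound (hm : 0 < m) (hK : 0 < K)
    (mach : Fin m → Fin K) (e : Fin m → ℝ) (p : ℝ) (hp : 0 < p)
    (hne : ∀ M : Fin K, (opsOn mach M).Nonempty)
    (Fixed : Finset (Fin m)) :
    ∀ S : Fin m → ℝ,
      (∀ o, e o ≤ S o) →
      (∀ o ∈ Fixed, S o = e o) →
      (∀ o o' : Fin m, o ≠ o' → mach o = mach o' →
        S o + p ≤ S o' ∨ S o' + p ≤ S o) →
      Finset.univ.sup' ⟨⟨0, hK⟩, Finset.mem_univ _⟩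
          (fun M => CM mach e p M (hne M) +
            max 0 (OT mach e p M - IT mach e p M (hne M))) ≤
        Finset.univ.sup' ⟨⟨0, hm⟩, Finset.mem_univ _⟩ (fun o => S o + p) := by
  intro S hS hFix hdisj
  apply Finset.sup'_le
  intro M _
  have hFne : (opsOn mach M).Nonempty := hne M
  have hCmax_le : (opsOn mach M).sup' hFne (fun o => S o + p) ≤
      Finset.univ.sup' ⟨⟨0, hm⟩, Finset.mem_univ _⟩ (fun o => S o + p) :=
    Finset.sup'_le _ _ fun o _ => Finset.le_sup' (fun o => S o + p) (Finset.mem_univ o)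
  have hCM : CM mach e p M (hne M) ≤ (opsOn mach M).sup' hFne (fun o => S o + p) :=
    Finset.sup'_le _ _ fun o ho =>
      le_trans (add_le_add_left (hS o) p) (Finset.le_sup' (fun o => S o + p) ho)
  have hcard : ((opsOn mach M).card : ℝ) * p + sMin mach e M (hne M) ≤
      (opsOn mach M).sup' hFne (fun o => S o + p) := by
    have hsub : (⋃ o ∈ opsOn mach M, Set.Ico (S o) (S o + p)) ⊆
        Set.Ico (sMin mach e M (hne M)) ((opsOn mach M).sup' hFne (fun o => S o + p)) := by
      intro x hx
      simp only [Set.mem_iUnion] at hx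
      obtain ⟨o, ho, hx⟩ := hx
      exact ⟨le_trans (le_trans (Finset.inf'_le _ ho) (hS o)) hx.1,
        lt_of_lt_of_le hx.2 (Finset.le_sup' (fun o => S o + p) ho)⟩
    have hdis : ((opsOn mach M) : Set (Fin m)).PairwiseDisjoint
        (fun o => Set.Ico (S o) (S o + p)) := by
      intro o ho o' ho' hne'
      have hmach : mach o = mach o' := by
        simp only [opsOn, Finset.mem_coe, Finset.mem_filter] at ho ho'
        rw [ho.2, ho'.2]
      apply Set.Ico_disjoint_Ico.mpr
      rcases hdisj o o' hne' hmach with h | h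
      · calc min (S o + p) (S o' + p) ≤ S o + p := min_le_left _ _
          _ ≤ S o' := h
          _ ≤ max (S o) (S o') := le_max_right _ _
      · calc min (S o + p) (S o' + p) ≤ S o' + p := min_le_right _ _
          _ ≤ S o := h
          _ ≤ max (S o) (S o') := le_max_left _ _
    have hvol : volume (⋃ o ∈ opsOn mach M, Set.Ico (S o) (S o + p)) =
        ((opsOn mach M).card : ENNReal) * ENNReal.ofReal p := by
      rw [measure_biUnion_finset hdis (fun o _ => measurableSet_Ico)]
      simp only [Real.volume_Ico, add_sub_cancel_left, Finset.sum_const, nsmul_eq_mul]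
    have hle : (((opsOn mach M).card : ENNReal)) * ENNReal.ofReal p ≤
        ENNReal.ofReal ((opsOn mach M).sup' hFne (fun o => S o + p)
          - sMin mach e M (hne M)) := by
      rw [← hvol, ← Real.volume_Ico]
      exact measure_mono hsub
    have hle' : ENNReal.ofReal (((opsOn mach M).card : ℝ) * p) ≤
        ENNReal.ofReal ((opsOn mach M).sup' hFne (fun o => S o + p)
          - sMin mach e M (hne M)) := by
      rwa [ENNReal.ofReal_mul (by positivity), ENNReal.ofReal_natCast]
    have hcpos : (0:ℝ) < ((opsOn mach M).card : ℝ) * p := by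
      have : 0 < (opsOn mach M).card := Finset.card_pos.mpr hFne
      positivity
    rcases ENNReal.ofReal_le_ofReal_iff'.mp hle' with h | h <;> linarith
  rcases le_or_gt (OT mach e p M - IT mach e p M (hne M)) 0 with h0 | h0
  · rw [max_eq_left h0, add_zero]
    exact le_trans hCM hCmax_le
  · rw [max_eq_right h0.le]
    have hOTIT : OT mach e p M - IT mach e p M (hne M) =
        ((opsOn mach M).card : ℝ) * p - CM mach e p M (hne M) + sMin mach e M (hne M) := by
      simp only [OT, IT]; ring
    rw [hOTIT]
    have heq : CM mach e p M (hne M) + (((opsOn mach M).card : ℝ) * p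
        - CM mach e p M (hne M) + sMin mach e M (hne M)) =
        ((opsOn mach M).card : ℝ) * p + sMin mach e M (hne M) := by ring
    rw [heq]
    exact le_trans hcard hCmax_le
end
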